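/- arXiv:2401.04869 — 5 statements merged into one kernel-verified Lean document; each statement's English description precedes it below -/
import Mathlib

section
/- Let f ∈ ℂ[z, z̄] be a polynomial in z and z̄. If f(ξ, ξ̄) = 0 for infinitely many ξ on the unit circle 𝕋 = {z : |z| = 1}, then there exists a polynomial g ∈ ℂ[z, z̄] such that f(z, z̄) = (1 − |z|²) g(z, z̄) for all z ∈ ℂ. In particular, f vanishes on all of 𝕋. -/
/-!
Substituting `X₀ ↦ T`, `X₁ ↦ T⁻¹` maps `P` to a Laurent polynomial whose value at a unit `ξ` is
`P(ξ, ξ⁻¹)`. On the unit circle `conj ξ = ξ⁻¹`, so this Laurent polynomial has infinitely many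
zeros; multiplied by a power of `T` it becomes an ordinary polynomial, hence it is zero. The kernel
of the substitution is generated by `X₀ X₁ - 1`, which gives the factorisation.
-/

open MvPolynomial ComplexConjugate

open LaurentPolynomial in
theorem LaurentPolynomial.eq_zero_of_infinite_eval₂_eq_zero {R : Type*} [CommRing R] [IsDomain R]
    {F : R[T;T⁻¹]} (hF : {x : Rˣ | eval₂ (RingHom.id R) x F = 0}.Infinite) : F = 0 := by
  obtain ⟨n, f, hf⟩ := exists_T_pow F
  suffices f = 0 by
    rwa [this, map_zero, eq_comm, (isUnit_T _).mul_left_eq_zero] at hf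
  refine f.eq_zero_of_infinite_isRoot ((hF.image Units.val_injective.injOn).mono ?_)
  rintro _ ⟨x, hx, rfl⟩
  have hfx := congrArg (eval₂ (RingHom.id R) x) hf
  rwa [eval₂_toLaurent, map_mul, hx, zero_mul] at hfx

namespace MvPolynomial

variable (R : Type*) [CommSemiring R]

noncomputable def evalTTInv : MvPolynomial (Fin 2) R →ₐ[R] LaurentPolynomial R :=
  aeval ![LaurentPolynomial.T 1, LaurentPolynomial.T (-1)]

variable {R}

theorem eval₂_evalTTInv {S : Type*} [CommSemiring S] (f : R →+* S) (x : Sˣ)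
    (P : MvPolynomial (Fin 2) R) :
    LaurentPolynomial.eval₂ f x (evalTTInv R P) = eval₂ f ![↑x, ↑x⁻¹] P := by
  show ((LaurentPolynomial.eval₂ f x).comp (evalTTInv R).toRingHom) P = eval₂Hom f _ P
  congr 1
  refine ringHom_ext (fun r => ?_) (fun i => ?_)
  · simp [evalTTInv]
  · fin_cases i <;> simp [evalTTInv]

/- The quotient map to `R[X₀, X₁] ⧸ (X₀ X₁ - 1)` factors through `evalTTInv` by evaluating
Laurent polynomials at the unit `X₀`, whose inverse there is `X₁`. -/
theorem ker_evalTTInv_le {R : Type*} [CommRing R] :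
    RingHom.ker (evalTTInv R) ≤ Ideal.span {X 0 * X 1 - 1} := by
  set I : Ideal (MvPolynomial (Fin 2) R) := Ideal.span {X 0 * X 1 - 1}
  have hX : Ideal.Quotient.mk I (X 0) * Ideal.Quotient.mk I (X 1) = 1 := by
    rw [← map_mul, ← sub_eq_zero, ← map_one (Ideal.Quotient.mk I), ← map_sub,
      Ideal.Quotient.eq_zero_iff_mem]
    exact Ideal.subset_span rfl
  set ψ := LaurentPolynomial.eval₂ ((Ideal.Quotient.mk I).comp C) ⟨_, _, hX, by rw [mul_comm, hX]⟩
  have hψ : ψ.comp (evalTTInv R).toRingHom = Ideal.Quotient.mk I := by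
    refine ringHom_ext (fun r => ?_) (fun i => ?_)
    · simp [ψ, evalTTInv]
    · fin_cases i <;> simp [ψ, evalTTInv]
  intro P hP
  rw [← Ideal.Quotient.eq_zero_iff_mem, ← hψ]
  simp [(RingHom.mem_ker).mp hP]

end MvPolynomial

theorem poly_vanishing_on_infinite_subset_of_circle
    (P : MvPolynomial (Fin 2) ℂ)
    (h : {ξ : ℂ | ‖ξ‖ = 1 ∧ eval ![ξ, conj ξ] P = 0}.Infinite) :
    (∃ Q : MvPolynomial (Fin 2) ℂ, ∀ z : ℂ,
        eval ![z, conj z] P = (1 - z * conj z) * eval ![z, conj z] Q) ∧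
    ∀ ξ : ℂ, ‖ξ‖ = 1 → eval ![ξ, conj ξ] P = 0 := by
  have hunits : (Units.val ⁻¹' {ξ : ℂ | ‖ξ‖ = 1 ∧ eval ![ξ, conj ξ] P = 0}).Infinite :=
    h.preimage fun ξ hξ => ⟨Units.mk0 ξ (norm_ne_zero_iff.mp (hξ.1.symm ▸ one_ne_zero)), rfl⟩
  have hLaurent : evalTTInv ℂ P = 0 := by
    refine LaurentPolynomial.eq_zero_of_infinite_eval₂_eq_zero (hunits.mono ?_)
    rintro x ⟨hx, hPx⟩
    rwa [Set.mem_ofPred_eq, eval₂_evalTTInv, Units.val_inv_eq_inv_val, Complex.inv_eq_conj hx]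
  obtain ⟨Q, rfl⟩ := Ideal.mem_span_singleton.mp (ker_evalTTInv_le hLaurent)
  have hfactor : ∀ z : ℂ, eval ![z, conj z] ((X 0 * X 1 - 1) * Q) =
      (1 - z * conj z) * eval ![z, conj z] (-Q) := fun z => by
    simp only [map_mul, map_sub, map_neg, eval_X, map_one, Matrix.cons_val_zero,
      Matrix.cons_val_one]
    ring
  refine ⟨⟨-Q, hfactor⟩, fun ξ hξ => ?_⟩
  rw [hfactor, Complex.mul_conj', hξ]
  norm_num
end

section
/- Let f(z, w) be a polynomial in z, w, z̄, w̄ and let h be a continuous function on the closed bidisc. Suppose f·h = 0 on the distinguished part 𝕋 × closure(𝔻) of the boundary. Then either f vanishes identically on 𝕋 × closure(𝔻) or h vanishes identically on 𝕋 × closure(𝔻). -/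
/-!
Parametrize `𝕋 × closure 𝔻` by `(θ, w) ↦ (exp (θ i), w)`. Along this parametrization `f` becomes a
real-analytic function on the connected space `ℝ × ℂ`, so if it is not identically zero on the
distinguished boundary, its nonvanishing set is dense. The continuous function `h` vanishes on that
dense set, hence on `ℝ × closure 𝔻`, because the closed disc is the closure of its interior.
-/

open MvPolynomial ComplexConjugate Metric Set Complex

theorem AnalyticOnNhd.dense_setOf_ne_zero {𝕜 E F : Type*} [NontriviallyNormedField 𝕜]
    [NormedAddCommGroup E] [NormedSpace 𝕜 E] [PreconnectedSpace E]
    [NormedAddCommGroup F] [NormedSpace 𝕜 F] {f : E → F} (hf : AnalyticOnNhd 𝕜 f univ)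
    {x₀ : E} (hx₀ : f x₀ ≠ 0) : Dense {x | f x ≠ 0} := by
  intro x
  by_contra hx
  have hfx : f =ᶠ[nhds x] 0 := by
    simpa [mem_closure_iff_frequently, Filter.not_frequently, Filter.EventuallyEq] using hx
  exact hx₀ (hf.eqOn_zero_of_preconnected_of_eventuallyEq_zero isPreconnected_univ
    (mem_univ x) hfx (mem_univ x₀))

theorem Set.EqOn.of_eqOn_inter_of_dense {X Y : Type*} [TopologicalSpace X] [TopologicalSpace Y]
    [T2Space Y] {f g : X → Y} {s V : Set X} (h : EqOn f g (s ∩ V)) (hf : ContinuousOn f s)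
    (hg : ContinuousOn g s) (hs : s ⊆ closure (interior s)) (hV : Dense V) :
    EqOn f g s := by
  refine (h.mono (inter_subset_inter_left _ interior_subset)).of_subset_closure hf hg
    (inter_subset_left.trans interior_subset) ?_
  exact hs.trans (closure_minimal (hV.open_subset_closure_inter isOpen_interior) isClosed_closure)

theorem univ_prod_closedBall_subset_closure_interior {X E : Type*} [TopologicalSpace X]
    [NormedAddCommGroup E] [NormedSpace ℝ E] (x : E) {r : ℝ} (hr : r ≠ 0) :
    (univ : Set X) ×ˢ closedBall x r ⊆ closure (interior (univ ×ˢ closedBall x r)) := by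
  rw [interior_prod_eq, closure_prod_eq, interior_univ, closure_univ, interior_closedBall x hr,
    closure_ball x hr]

theorem AnalyticOnNhd.eval_conj {E : Type*} [NormedAddCommGroup E] [NormedSpace ℝ E]
    {f g : E → ℂ} {s : Set E} (hf : AnalyticOnNhd ℝ f s) (hg : AnalyticOnNhd ℝ g s)
    (P : MvPolynomial (Fin 4) ℂ) :
    AnalyticOnNhd ℝ (fun x => eval ![f x, g x, conj (f x), conj (g x)] P) s := by
  have hconj : AnalyticOnNhd ℝ (conj : ℂ → ℂ) univ := conjCLE.toContinuousLinearMap.analyticOnNhd _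
  simp_rw [← coe_aeval_eq_eval]
  refine AnalyticOnNhd.aeval_mvPolynomial (fun i => ?_) P
  fin_cases i
  · exact hf
  · exact hg
  · exact hconj.comp hf (mapsTo_univ _ _)
  · exact hconj.comp hg (mapsTo_univ _ _)

theorem poly_or_continuous_factor_vanishes_on_distinguished_boundary
    (P : MvPolynomial (Fin 4) ℂ) (h : ℂ × ℂ → ℂ)
    (hc : ContinuousOn h (closedBall (0 : ℂ) 1 ×ˢ closedBall (0 : ℂ) 1))
    (hzero : ∀ ξ w : ℂ, ‖ξ‖ = 1 → ‖w‖ ≤ 1 →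
      eval ![ξ, w, conj ξ, conj w] P * h (ξ, w) = 0) :
    (∀ ξ w : ℂ, ‖ξ‖ = 1 → ‖w‖ ≤ 1 → eval ![ξ, w, conj ξ, conj w] P = 0) ∨
    (∀ ξ w : ℂ, ‖ξ‖ = 1 → ‖w‖ ≤ 1 → h (ξ, w) = 0) := by
  refine or_iff_not_imp_left.2 fun hP => ?_
  push Not at hP
  obtain ⟨ξ₀, w₀, hξ₀, hw₀, hP₀⟩ := hP
  have exp_arg : ∀ ξ : ℂ, ‖ξ‖ = 1 → exp (arg ξ * I) = ξ := fun ξ hξ => by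
    simpa [hξ] using norm_mul_exp_arg_mul_I ξ
  set e : ℝ × ℂ → ℂ := fun p => exp (p.1 * I)
  have he : ∀ p, ‖e p‖ = 1 := fun p => norm_exp_ofReal_mul_I p.1
  have he_analytic : AnalyticOnNhd ℝ e univ :=
    analyticOnNhd_cexp.restrictScalars.comp
      (((ofRealCLM.comp (.fst ℝ ℝ ℂ)).analyticOnNhd _).mul analyticOnNhd_const) (mapsTo_univ _ _)
  have hdense : Dense {p | eval ![e p, p.2, conj (e p), conj p.2] P ≠ 0} :=
    (he_analytic.eval_conj analyticOnNhd_snd P).dense_setOf_ne_zero (x₀ := (arg ξ₀, w₀))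
      (by simpa [e, exp_arg ξ₀ hξ₀])
  have hvanish : EqOn (fun p => h (e p, p.2)) 0 (univ ×ˢ closedBall 0 1) := by
    refine EqOn.of_eqOn_inter_of_dense ?_ ?_ continuousOn_const
      (univ_prod_closedBall_subset_closure_interior (0 : ℂ) one_ne_zero) hdense
    · rintro p ⟨⟨-, hp⟩, hPp⟩
      exact (mul_eq_zero.1 (hzero _ _ (he p) (mem_closedBall_zero_iff.1 hp))).resolve_left hPp
    · refine hc.comp (by fun_prop) fun p hp => ⟨?_, hp.2⟩
      simp [he]
  intro ξ w hξ hw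
  simpa [e, exp_arg ξ hξ] using
    hvanish (x := (arg ξ, w)) ⟨mem_univ _, mem_closedBall_zero_iff.2 hw⟩
end

section
/- Let f(z, w) be a polynomial in z, w, z̄, w̄ and h continuous on the closed bidisc with f·h = 0 on the full topological boundary b𝔻² of the bidisc. Then (f = 0 on 𝕋 × closure(𝔻) or h = 0 on 𝕋 × closure(𝔻)) and (f = 0 on closure(𝔻) × 𝕋 or h = 0 on closure(𝔻) × 𝕋). -/
/-!
On the face `𝕋 × closure 𝔻` write `ξ = exp (θ i)`: the symbol becomes a real-analytic function of
`(θ, w) ∈ ℝ × ℂ`. If `h` is nonzero somewhere on `𝕋 × 𝔻`, it stays nonzero on a relatively open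
piece of the face, the symbol vanishes there, and the identity theorem makes it vanish on all of
`𝕋 × ℂ`. Otherwise `h` vanishes on `𝕋 × 𝔻`, hence by continuity on its closure `𝕋 × closure 𝔻`.
The face `closure 𝔻 × 𝕋` is the same statement after swapping the coordinates.
-/

open MvPolynomial ComplexConjugate Metric Filter Set Topology

theorem analyticOnNhd_eval_conj (P : MvPolynomial (Fin 4) ℂ) {E : Type*}
    [NormedAddCommGroup E] [NormedSpace ℝ E] (a b : E →L[ℝ] ℂ) :
    AnalyticOnNhd ℝ (fun q => eval ![a q, b q, conj (a q), conj (b q)] P) univ := by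
  refine (AnalyticOnNhd.eval_continuousLinearMap' ![a, b,
    Complex.conjCLE.toContinuousLinearMap.comp a, Complex.conjCLE.toContinuousLinearMap.comp b]
    P).congr isOpen_univ fun q _ => ?_
  congr 2
  funext i
  fin_cases i <;> rfl

theorem analyticAt_exp_mul_I_prod (x : ℝ × ℂ) :
    AnalyticAt ℝ (fun x : ℝ × ℂ => (Complex.exp (x.1 * Complex.I), x.2)) x := by
  have hθ : AnalyticAt ℝ (fun x : ℝ × ℂ => (x.1 : ℂ) * Complex.I) x :=
    ((Complex.ofRealCLM.comp (ContinuousLinearMap.fst ℝ ℝ ℂ)).analyticAt x).mul analyticAt_const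
  exact ((analyticAt_cexp.restrictScalars (𝕜 := ℝ)).comp hθ).prod analyticAt_snd

theorem exists_exp_mul_I_eq {ξ : ℂ} (hξ : ξ ∈ sphere (0 : ℂ) 1) :
    ∃ θ : ℝ, Complex.exp (θ * Complex.I) = ξ :=
  ⟨ξ.arg, by simpa [mem_sphere_zero_iff_norm.1 hξ] using Complex.norm_mul_exp_arg_mul_I ξ⟩

/-- `𝕋 × ℂ` is not a vector space, so the identity theorem is applied on `ℝ × ℂ` after pulling
back along `(θ, w) ↦ (exp (θ i), w)`. -/
theorem AnalyticOnNhd.eqOn_zero_sphere_prod_of_eventuallyEq_zero {F : ℂ × ℂ → ℂ}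
    (hF : AnalyticOnNhd ℝ F univ) {p : ℂ × ℂ} (hp : p ∈ sphere (0 : ℂ) 1 ×ˢ univ)
    (hFp : F =ᶠ[𝓝[sphere (0 : ℂ) 1 ×ˢ univ] p] 0) :
    EqOn F 0 (sphere (0 : ℂ) 1 ×ˢ univ) := by
  set Φ : ℝ × ℂ → ℂ × ℂ := fun x => (Complex.exp (x.1 * Complex.I), x.2)
  have hΦ_mem : ∀ x, Φ x ∈ sphere (0 : ℂ) 1 ×ˢ univ := fun x =>
    ⟨by simp [Φ, Complex.norm_exp_ofReal_mul_I], mem_univ _⟩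
  have hΦ_surj : ∀ q ∈ sphere (0 : ℂ) 1 ×ˢ univ, ∃ x, Φ x = q := fun q hq => by
    obtain ⟨θ, hθ⟩ := exists_exp_mul_I_eq hq.1
    exact ⟨(θ, q.2), by simp [Φ, hθ]⟩
  obtain ⟨x₀, rfl⟩ := hΦ_surj p hp
  have hFΦ_near : F ∘ Φ =ᶠ[𝓝 x₀] 0 :=
    (tendsto_nhdsWithin_iff.2 ⟨(analyticAt_exp_mul_I_prod x₀).continuousAt,
      Eventually.of_forall hΦ_mem⟩).eventually hFp
  have hFΦ : AnalyticOnNhd ℝ (F ∘ Φ) univ := fun x _ =>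
    (hF (Φ x) trivial).comp (analyticAt_exp_mul_I_prod x)
  have hFΦ_zero := hFΦ.eqOn_zero_of_preconnected_of_eventuallyEq_zero isPreconnected_univ
    (mem_univ x₀) hFΦ_near
  intro q hq
  obtain ⟨x, rfl⟩ := hΦ_surj q hq
  exact hFΦ_zero (mem_univ x)

theorem AnalyticOnNhd.eqOn_zero_or_eqOn_zero_sphere_prod_closedBall {F h : ℂ × ℂ → ℂ}
    (hF : AnalyticOnNhd ℝ F univ) (hh : ContinuousOn h (sphere (0 : ℂ) 1 ×ˢ closedBall 0 1))
    (hFh : ∀ q ∈ sphere (0 : ℂ) 1 ×ˢ closedBall 0 1, F q * h q = 0) :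
    EqOn F 0 (sphere (0 : ℂ) 1 ×ˢ closedBall 0 1) ∨
      EqOn h 0 (sphere (0 : ℂ) 1 ×ˢ closedBall 0 1) := by
  by_cases H : ∃ p ∈ sphere (0 : ℂ) 1 ×ˢ ball 0 1, h p ≠ 0
  · obtain ⟨p, ⟨hp₁, hp₂⟩, hhp⟩ := H
    have hface : sphere (0 : ℂ) 1 ×ˢ closedBall 0 1 ∈ 𝓝[sphere (0 : ℂ) 1 ×ˢ univ] p :=
      mem_nhdsWithin.2 ⟨univ ×ˢ ball 0 1, isOpen_univ.prod isOpen_ball, ⟨trivial, hp₂⟩,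
        fun q ⟨⟨_, hq₂⟩, hq₁, _⟩ => ⟨hq₁, ball_subset_closedBall hq₂⟩⟩
    have hle := nhdsWithin_le_of_mem hface
    have hFp : F =ᶠ[𝓝[sphere (0 : ℂ) 1 ×ˢ univ] p] 0 := by
      filter_upwards [hle (hh p ⟨hp₁, ball_subset_closedBall hp₂⟩ (isOpen_ne.mem_nhds hhp)),
        hle self_mem_nhdsWithin] with q hq hq_face
      exact (mul_eq_zero.1 (hFh q hq_face)).resolve_right hq
    exact .inl fun q hq =>
      hF.eqOn_zero_sphere_prod_of_eventuallyEq_zero ⟨hp₁, trivial⟩ hFp ⟨hq.1, trivial⟩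
  · push Not at H
    refine .inr (EqOn.of_subset_closure H hh continuousOn_const
      (prod_mono subset_rfl ball_subset_closedBall) ?_)
    rw [closure_prod_eq, isClosed_sphere.closure_eq, closure_ball _ one_ne_zero]

theorem symbol_vanishing_on_bidisc_boundary
    (P : MvPolynomial (Fin 4) ℂ) (h : ℂ × ℂ → ℂ)
    (hc : ContinuousOn h (closedBall (0 : ℂ) 1 ×ˢ closedBall (0 : ℂ) 1))
    (hzero : ∀ z w : ℂ, ‖z‖ ≤ 1 → ‖w‖ ≤ 1 → (‖z‖ = 1 ∨ ‖w‖ = 1) →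
      eval ![z, w, conj z, conj w] P * h (z, w) = 0) :
    ((∀ ξ w : ℂ, ‖ξ‖ = 1 → ‖w‖ ≤ 1 → eval ![ξ, w, conj ξ, conj w] P = 0) ∨
      (∀ ξ w : ℂ, ‖ξ‖ = 1 → ‖w‖ ≤ 1 → h (ξ, w) = 0)) ∧
    ((∀ z ξ : ℂ, ‖z‖ ≤ 1 → ‖ξ‖ = 1 → eval ![z, ξ, conj z, conj ξ] P = 0) ∨
      (∀ z ξ : ℂ, ‖z‖ ≤ 1 → ‖ξ‖ = 1 → h (z, ξ) = 0)) := by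
  have mem_face {ξ w : ℂ} (hξ : ‖ξ‖ = 1) (hw : ‖w‖ ≤ 1) :
      (ξ, w) ∈ sphere (0 : ℂ) 1 ×ˢ closedBall (0 : ℂ) 1 :=
    ⟨mem_sphere_zero_iff_norm.2 hξ, mem_closedBall_zero_iff.2 hw⟩
  have norm_of_mem_face {q : ℂ × ℂ} (hq : q ∈ sphere (0 : ℂ) 1 ×ˢ closedBall (0 : ℂ) 1) :
      ‖q.1‖ = 1 ∧ ‖q.2‖ ≤ 1 :=
    ⟨mem_sphere_zero_iff_norm.1 hq.1, mem_closedBall_zero_iff.1 hq.2⟩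
  have hc₁ : ContinuousOn h (sphere (0 : ℂ) 1 ×ˢ closedBall (0 : ℂ) 1) :=
    hc.mono (prod_mono sphere_subset_closedBall subset_rfl)
  have hc₂ : ContinuousOn (h ∘ Prod.swap) (sphere (0 : ℂ) 1 ×ˢ closedBall (0 : ℂ) 1) :=
    hc.comp continuous_swap.continuousOn fun q hq => ⟨hq.2, sphere_subset_closedBall hq.1⟩
  have hF₁ : AnalyticOnNhd ℝ (fun q : ℂ × ℂ => eval ![q.1, q.2, conj q.1, conj q.2] P) univ :=
    analyticOnNhd_eval_conj P (.fst ℝ ℂ ℂ) (.snd ℝ ℂ ℂ)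
  have hF₂ : AnalyticOnNhd ℝ (fun q : ℂ × ℂ => eval ![q.2, q.1, conj q.2, conj q.1] P) univ :=
    analyticOnNhd_eval_conj P (.snd ℝ ℂ ℂ) (.fst ℝ ℂ ℂ)
  refine ⟨?_, ?_⟩
  · rcases hF₁.eqOn_zero_or_eqOn_zero_sphere_prod_closedBall hc₁ fun q hq =>
      hzero q.1 q.2 (norm_of_mem_face hq).1.le (norm_of_mem_face hq).2
        (.inl (norm_of_mem_face hq).1) with hP | hh
    · exact .inl fun ξ w hξ hw => by simpa using hP (mem_face hξ hw)
    · exact .inr fun ξ w hξ hw => by simpa using hh (mem_face hξ hw)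
  · rcases hF₂.eqOn_zero_or_eqOn_zero_sphere_prod_closedBall hc₂ fun q hq =>
      hzero q.2 q.1 (norm_of_mem_face hq).2 (norm_of_mem_face hq).1.le
        (.inr (norm_of_mem_face hq).1) with hP | hh
    · exact .inl fun z ξ hz hξ => by simpa using hP (mem_face hξ hz)
    · exact .inr fun z ξ hz hξ => by simpa using hh (mem_face hξ hz)
end

section
/- Let φ, ψ be the radial functions φ(w) = max(1 − 2|w|, 0) and ψ(w) = max(2|w| − 1, 0) on the unit disc. Then the product of Toeplitz operators T_φ T_ψ on the Bergman space A²(𝔻) is not the zero operator, even though φ·ψ ≡ 0 on the disc. -/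
open MeasureTheory Metric ComplexConjugate

/-- The Bergman kernel of the unit disc: K(w,z) = 1/(π (1 − w z̄)²). -/
noncomputable def bergmanKernel (w z : ℂ) : ℂ := 1 / (Real.pi * (1 - w * conj z) ^ 2)

/-- The Toeplitz operator with symbol φ on the Bergman space of the unit disc,
expressed via the reproducing-kernel integral formula. -/
noncomputable def toeplitzD (φ h : ℂ → ℂ) : ℂ → ℂ :=
  fun w => ∫ z in ball (0 : ℂ) 1, bergmanKernel w z * (φ z * h z)

/-- φ(w) = max(1 − 2|w|, 0). -/
noncomputable def phiEx (w : ℂ) : ℂ := ((max (1 - 2 * ‖w‖) 0 : ℝ) : ℂ)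

/-- ψ(w) = max(2|w| − 1, 0). -/
noncomputable def psiEx (w : ℂ) : ℂ := ((max (2 * ‖w‖ - 1) 0 : ℝ) : ℂ)

/-!
Expanding the Bergman kernel as `K(w, ζ) = π⁻¹ ∑ (n + 1) wⁿ ζ̄ⁿ` and using that `∫ ψ ζ̄ⁿ = 0` for
`n ≥ 1` when `ψ` is radial (rotate by an `n`-th root of `-1`), `T_ψ 1` is the constant
`π⁻¹ ∫ ψ`. Since `K(0, ·) = π⁻¹`, this gives `(T_φ T_ψ 1)(0) = π⁻² ∫ φ ∫ ψ`, and both integrals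
are positive.
-/

def IsRadial (φ : ℂ → ℂ) : Prop := ∀ z ζ, ‖z‖ = ‖ζ‖ → φ z = φ ζ

instance isFiniteMeasure_volume_restrict_ball (c : ℂ) (r : ℝ) :
    IsFiniteMeasure (volume.restrict (ball c r)) :=
  isFiniteMeasure_restrict.2 measure_ball_lt_top.ne

lemma hasSum_succ_mul_geometric {𝕜 : Type*} [NormedField 𝕜] [CompleteSpace 𝕜] {r : 𝕜}
    (hr : ‖r‖ < 1) : HasSum (fun n : ℕ => ((n : 𝕜) + 1) * r ^ n) (1 / (1 - r) ^ 2) := by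
  simpa using hasSum_choose_mul_geometric_of_norm_lt_one 1 hr

lemma hasSum_bergmanKernel {w ζ : ℂ} (h : ‖w * conj ζ‖ < 1) :
    HasSum (fun n : ℕ => ((n : ℂ) + 1) * w ^ n / Real.pi * conj ζ ^ n) (bergmanKernel w ζ) := by
  have hterm : (fun n : ℕ => ((n : ℂ) + 1) * w ^ n / Real.pi * conj ζ ^ n) =
      fun n : ℕ => ((n : ℂ) + 1) * (w * conj ζ) ^ n / Real.pi := by
    funext n
    ring
  rw [hterm, bergmanKernel, mul_comm (Real.pi : ℂ), ← div_div]
  exact (hasSum_succ_mul_geometric h).div_const _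

lemma bergmanKernel_zero_left (z : ℂ) : bergmanKernel 0 z = 1 / Real.pi := by
  simp [bergmanKernel]

lemma toeplitzD_apply_zero (φ h : ℂ → ℂ) :
    toeplitzD φ h 0 = (∫ z in ball (0 : ℂ) 1, φ z * h z) / Real.pi := by
  simp only [toeplitzD, bergmanKernel_zero_left, integral_const_mul]
  ring

lemma IsRadial.setIntegral_ball_conj_pow_mul_eq_zero {φ : ℂ → ℂ} (hφ : IsRadial φ) (r : ℝ)
    {n : ℕ} (hn : n ≠ 0) : ∫ ζ in ball (0 : ℂ) r, conj ζ ^ n * φ ζ = 0 := by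
  set a : ℂ := Complex.exp ((Real.pi / n : ℝ) * Complex.I)
  have ha : ‖a‖ = 1 := Complex.norm_exp_ofReal_mul_I _
  have han : a ^ n = -1 := by
    rw [← Complex.exp_nat_mul, ← Complex.exp_pi_mul_I]
    congr 1
    push_cast
    field_simp
  set u : Circle := ⟨a, mem_sphere_zero_iff_norm.mpr ha⟩
  have hball : rotation u ⁻¹' ball (0 : ℂ) r = ball 0 r := by
    ext ζ
    simp [u]
  have hrot := (rotation u).measurePreserving.setIntegral_preimage_emb
    (rotation u).toHomeomorph.measurableEmbedding (fun ζ => conj ζ ^ n * φ ζ) (ball 0 r)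
  have hodd : ∀ ζ, conj (rotation u ζ) ^ n * φ (rotation u ζ) = -(conj ζ ^ n * φ ζ) := by
    intro ζ
    have : conj a ^ n = -1 := by rw [← map_pow, han, map_neg, map_one]
    rw [rotation_apply, hφ _ ζ (by simp [u, ha]), show ((u : ℂ) = a) from rfl, map_mul, mul_pow,
      this]
    ring
  simp only [hball, hodd, integral_neg] at hrot
  linear_combination -hrot / 2

lemma hasSum_toeplitzD_one {φ : ℂ → ℂ} (hcont : Continuous φ) {w : ℂ} (hw : ‖w‖ < 1) :
    HasSum (fun n : ℕ => ((n : ℂ) + 1) * w ^ n / Real.pi *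
      ∫ ζ in ball (0 : ℂ) 1, conj ζ ^ n * φ ζ) (toeplitzD φ 1 w) := by
  obtain ⟨C, hC⟩ :=
    (isCompact_closedBall (0 : ℂ) 1).exists_bound_of_continuousOn hcont.continuousOn
  simp_rw [← integral_const_mul]
  refine hasSum_integral_of_dominated_convergence
    (fun n _ => ((n : ℝ) + 1) * ‖w‖ ^ n / Real.pi * C) (fun n => ?_) (fun n => ?_)
    (ae_of_all _ fun _ => ?_) (integrable_const _) ?_
  · exact Continuous.aestronglyMeasurable (by fun_prop)
  · refine ae_restrict_of_forall_mem measurableSet_ball fun ζ hζ => ?_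
    have hnorm : ‖(n : ℂ) + 1‖ = n + 1 := by exact_mod_cast Complex.norm_natCast (n + 1)
    simp only [norm_mul, norm_div, norm_pow, Complex.norm_conj, Complex.norm_real, hnorm,
      Real.norm_of_nonneg Real.pi_pos.le]
    calc _ ≤ ((n : ℝ) + 1) * ‖w‖ ^ n / Real.pi * (1 * C) := by
          gcongr
          · exact pow_le_one₀ (norm_nonneg ζ) (mem_ball_zero_iff.mp hζ).le
          · exact hC ζ (ball_subset_closedBall hζ)
      _ = _ := by rw [one_mul]
  · have := (hasSum_succ_mul_geometric (r := ‖w‖) (by simpa using hw)).summable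
    exact (this.div_const _).mul_right _
  · refine ae_restrict_of_forall_mem measurableSet_ball fun ζ hζ => ?_
    have hζ1 : ‖ζ‖ < 1 := mem_ball_zero_iff.mp hζ
    have hwζ : ‖w * conj ζ‖ < 1 := by
      rw [norm_mul, Complex.norm_conj]
      nlinarith [norm_nonneg w, norm_nonneg ζ]
    simpa [mul_assoc] using (hasSum_bergmanKernel hwζ).mul_right (φ ζ)

lemma IsRadial.toeplitzD_one {φ : ℂ → ℂ} (hcont : Continuous φ) (hrad : IsRadial φ) {w : ℂ}
    (hw : ‖w‖ < 1) : toeplitzD φ 1 w = (∫ ζ in ball (0 : ℂ) 1, φ ζ) / Real.pi := by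
  have hterms : ∀ n : ℕ, n ≠ 0 → ((n : ℂ) + 1) * w ^ n / Real.pi *
      ∫ ζ in ball (0 : ℂ) 1, conj ζ ^ n * φ ζ = 0 := fun n hn => by
    rw [hrad.setIntegral_ball_conj_pow_mul_eq_zero 1 hn, mul_zero]
  rw [(hasSum_toeplitzD_one hcont hw).unique (hasSum_single 0 hterms)]
  simp [div_eq_inv_mul]

lemma toeplitzD_toeplitzD_one_apply_zero (φ : ℂ → ℂ) {ψ : ℂ → ℂ} (hψ : Continuous ψ)
    (hrad : IsRadial ψ) :
    toeplitzD φ (toeplitzD ψ 1) 0 =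
      (∫ z in ball (0 : ℂ) 1, φ z) * (∫ z in ball (0 : ℂ) 1, ψ z) / Real.pi ^ 2 := by
  rw [toeplitzD_apply_zero, setIntegral_congr_fun measurableSet_ball fun z hz => by
    rw [hrad.toeplitzD_one hψ (mem_ball_zero_iff.mp hz)], integral_mul_const]
  ring

lemma setIntegral_ball_pos {X : Type*} [MetricSpace X] [ProperSpace X] [MeasurableSpace X]
    [OpensMeasurableSpace X] {μ : Measure X} [IsFiniteMeasureOnCompacts μ] [μ.IsOpenPosMeasure]
    {f : X → ℝ} (hf : Continuous f) (h0 : 0 ≤ f) {c x : X} {r : ℝ} (hx : x ∈ ball c r)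
    (hfx : f x ≠ 0) : 0 < ∫ z in ball c r, f z ∂μ := by
  refine (setIntegral_pos_iff_support_of_nonneg_ae (ae_of_all _ h0) ?_).2 ?_
  · exact (hf.continuousOn.integrableOn_compact (isCompact_closedBall c r)).mono_set
      ball_subset_closedBall
  · exact (hf.isOpen_support.inter isOpen_ball).measure_pos μ ⟨x, hfx, hx⟩

lemma phiEx_mul_psiEx (w : ℂ) : phiEx w * psiEx w = 0 := by
  rw [phiEx, psiEx, ← Complex.ofReal_mul, Complex.ofReal_eq_zero]
  rcases le_total (2 * ‖w‖) 1 with h | h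
  · rw [max_eq_right (by linarith : 2 * ‖w‖ - 1 ≤ 0), mul_zero]
  · rw [max_eq_right (by linarith : 1 - 2 * ‖w‖ ≤ 0), zero_mul]

lemma isRadial_psiEx : IsRadial psiEx := fun z ζ h => by rw [psiEx, psiEx, h]

lemma setIntegral_phiEx_ne_zero : ∫ z in ball (0 : ℂ) 1, phiEx z ≠ 0 := by
  unfold phiEx
  rw [integral_complex_ofReal, Complex.ofReal_ne_zero]
  refine (setIntegral_ball_pos (μ := volume) ?_ ?_ (x := 0) ?_ ?_).ne'
  · fun_prop
  · exact fun z => le_max_right _ _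
  · simp
  · norm_num

lemma setIntegral_psiEx_ne_zero : ∫ z in ball (0 : ℂ) 1, psiEx z ≠ 0 := by
  unfold psiEx
  rw [integral_complex_ofReal, Complex.ofReal_ne_zero]
  refine (setIntegral_ball_pos (μ := volume) ?_ ?_ (x := 3 / 4) ?_ ?_).ne'
  · fun_prop
  · exact fun z => le_max_right _ _
  · norm_num
  · norm_num

theorem product_toeplitz_nonzero_with_vanishing_product_symbol :
    (∀ w ∈ ball (0 : ℂ) 1, phiEx w * psiEx w = 0) ∧
    ∃ h : ℂ → ℂ, DifferentiableOn ℂ h (ball (0 : ℂ) 1) ∧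
      MemLp h 2 (volume.restrict (ball (0 : ℂ) 1)) ∧
      ∃ w ∈ ball (0 : ℂ) 1, toeplitzD phiEx (toeplitzD psiEx h) w ≠ 0 := by
  refine ⟨fun w _ => phiEx_mul_psiEx w, 1, differentiableOn_const 1, memLp_const 1, 0,
    mem_ball_self one_pos, ?_⟩
  rw [toeplitzD_toeplitzD_one_apply_zero phiEx (by fun_prop [psiEx]) isRadial_psiEx]
  exact div_ne_zero (mul_ne_zero setIntegral_phiEx_ne_zero setIntegral_psiEx_ne_zero)
    (pow_ne_zero 2 (Complex.ofReal_ne_zero.2 Real.pi_ne_zero))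
end

section
/- Let ψ be continuous on the closed polydisc closure(𝔻ⁿ) (n ≥ 2), let ζ ∈ 𝕋, and define ψ_ζ(z) = ψ(ζ, z₂, …, zₙ). Suppose {h_p : p ∈ 𝔻ⁿ} is a family of functions in L²(𝔻^{n−1}) with uniformly bounded norms. Then for q = (ζ, q') with q' ∈ closure(𝔻^{n−1}), we have ‖(ψ − ψ_ζ) · k^𝔻_{p₁} · h_p‖_{L²(𝔻ⁿ)} → 0 as p = (p₁, p') → q in 𝔻ⁿ, where k^𝔻_{p₁}(z₁) = (1 − |p₁|²)/(√π (1 − p̄₁ z₁)²) is the normalized Bergman kernel of the unit disc at p₁. -/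
open Metric MeasureTheory ComplexConjugate Filter

/-- The normalized Bergman kernel of the unit disc at p₁:
k_{p₁}(z₁) = (1 − |p₁|²)/(√π (1 − p̄₁ z₁)²). -/
noncomputable def normBergmanKernel (p z : ℂ) : ℂ :=
  ((1 - ‖p‖ ^ 2 : ℝ) : ℂ) / (Real.sqrt Real.pi * (1 - conj p * z) ^ 2)

/-!
Split the first factor 𝔻 into a small disc around ζ and its complement. Near ζ the factor
ψ − ψ_ζ is uniformly small by uniform continuity, and `k_{p₁}` has norm at most one in `L²(𝔻)`:
up to the factor `√π` it is the derivative of the disc automorphism exchanging `0` and `p₁`, so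
`π ‖k_{p₁}‖²` is the area of the image of 𝔻. Away from ζ, ψ − ψ_ζ is bounded while `k_{p₁}`
tends to zero uniformly as `p₁ → ζ`. In both parts Tonelli separates the variable `z'`, which
contributes the bounded factor `‖h_p‖`.
-/

open Topology
open scoped ENNReal

theorem tendsto_nhds_zero_of_forall_le_ofReal_mul_add {X : Type*} {l : Filter X}
    {Φ : X → ℝ≥0∞} {K : ℝ≥0∞} (hK : K ≠ ∞)
    (h : ∀ ε : ℝ, 0 < ε → ∃ Ψ : X → ℝ≥0∞, Tendsto Ψ l (𝓝 0) ∧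
      ∀ᶠ x in l, Φ x ≤ ENNReal.ofReal ε * K + Ψ x) :
    Tendsto Φ l (𝓝 0) := by
  have hεK : Tendsto (fun ε : ℝ => ENNReal.ofReal ε * K) (𝓝[>] 0) (𝓝 0) := by
    have hε : Tendsto ENNReal.ofReal (𝓝[>] 0) (𝓝 0) :=
      (ENNReal.continuous_ofReal.tendsto' 0 0 ENNReal.ofReal_zero).mono_left nhdsWithin_le_nhds
    simpa using ENNReal.Tendsto.mul_const hε (Or.inr hK)
  rw [ENNReal.tendsto_nhds_zero] at hεK ⊢
  intro η hη
  have hη2 : 0 < η / 2 := ENNReal.half_pos hη.ne'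
  obtain ⟨ε, hεηK, hε⟩ := ((hεK _ hη2).and self_mem_nhdsWithin).exists
  obtain ⟨Ψ, hΨ, hΦ⟩ := h ε hε
  filter_upwards [hΦ, ENNReal.tendsto_nhds_zero.1 hΨ _ hη2] with x hΦx hΨx
  calc Φ x ≤ ENNReal.ofReal ε * K + Ψ x := hΦx
    _ ≤ η / 2 + η / 2 := add_le_add hεηK hΨx
    _ = η := ENNReal.add_halves η

section Slice

variable {X Y E : Type*} [PseudoMetricSpace X] [PseudoMetricSpace Y] [SeminormedAddCommGroup E]
  {ψ : X × Y → E} {K : Set X} {L : Set Y} {ζ : X}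

theorem ContinuousOn.exists_forall_norm_sub_le (hψ : ContinuousOn ψ (K ×ˢ L)) (hK : IsCompact K)
    (hL : IsCompact L) (hζ : ζ ∈ K) :
    ∃ M, 0 ≤ M ∧ ∀ z ∈ K ×ˢ L, ‖ψ z - ψ (ζ, z.2)‖ ≤ M := by
  obtain ⟨B, hB⟩ := (hK.prod hL).exists_bound_of_continuousOn hψ
  refine ⟨2 * max B 0, by positivity, fun z hz => ?_⟩
  have h₁ := hB z hz
  have h₂ := hB (ζ, z.2) ⟨hζ, hz.2⟩
  linarith [norm_sub_le (ψ z) (ψ (ζ, z.2)), le_max_left B 0]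

theorem ContinuousOn.exists_forall_dist_lt_norm_sub_le (hψ : ContinuousOn ψ (K ×ˢ L))
    (hK : IsCompact K) (hL : IsCompact L) (hζ : ζ ∈ K) {ε : ℝ} (hε : 0 < ε) :
    ∃ δ > 0, ∀ z ∈ K ×ˢ L, dist z.1 ζ < δ → ‖ψ z - ψ (ζ, z.2)‖ ≤ ε := by
  obtain ⟨δ, hδ, hψδ⟩ :=
    Metric.uniformContinuousOn_iff.1 ((hK.prod hL).uniformContinuousOn_of_continuous hψ) ε hε
  refine ⟨δ, hδ, fun z hz hzζ => ?_⟩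
  rw [← dist_eq_norm]
  refine (hψδ z hz (ζ, z.2) ⟨hζ, hz.2⟩ ?_).le
  rwa [Prod.dist_eq, dist_self, max_eq_left dist_nonneg]

end Slice

section ProductBound

variable {α β : Type*} [MeasurableSpace α] [MeasurableSpace β] {μ : Measure α} {ν : Measure β}

theorem eLpNorm_prod_le_mul_of_norm_le {E F G : Type*} [NormedAddCommGroup E]
    [NormedAddCommGroup F] [NormedAddCommGroup G] [SFinite ν] {Φ : α × β → E} {f : α → F}
    {g : β → G} {p : ℝ≥0∞} (hp : p ≠ ∞) (hf : AEStronglyMeasurable f μ)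
    (hg : AEStronglyMeasurable g ν) (hΦ : ∀ᵐ z ∂μ.prod ν, ‖Φ z‖ ≤ ‖f z.1‖ * ‖g z.2‖) :
    eLpNorm Φ p (μ.prod ν) ≤ eLpNorm f p μ * eLpNorm g p ν := by
  rcases eq_or_ne p 0 with rfl | hp0
  · simp
  simp only [eLpNorm_eq_lintegral_rpow_enorm_toReal hp0 hp]
  rw [← ENNReal.mul_rpow_of_nonneg _ _ (by positivity),
    ← lintegral_prod_mul (hf.enorm.pow_const _) (hg.enorm.pow_const _)]
  refine ENNReal.rpow_le_rpow (lintegral_mono_ae ?_) (by positivity)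
  filter_upwards [hΦ] with z hz
  rw [← ENNReal.mul_rpow_of_nonneg _ _ ENNReal.toReal_nonneg]
  refine ENNReal.rpow_le_rpow ?_ ENNReal.toReal_nonneg
  rw [← ofReal_norm, ← ofReal_norm, ← ofReal_norm, ← ENNReal.ofReal_mul (norm_nonneg _)]
  exact ENNReal.ofReal_le_ofReal hz

theorem eLpNorm_mul_mul_prod_le {𝕜 : Type*} [NormedDivisionRing 𝕜] [SFinite ν] {a : α × β → 𝕜}
    {k : α → 𝕜} {g : β → 𝕜} {U : Set α} {ε M : ℝ} {p : ℝ≥0∞} (hp1 : 1 ≤ p) (hp : p ≠ ∞)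
    (hk : AEStronglyMeasurable k μ) (hU : MeasurableSet U) (hg : AEStronglyMeasurable g ν)
    (hε : 0 ≤ ε) (hM : 0 ≤ M) (haM : ∀ᵐ z ∂μ.prod ν, ‖a z‖ ≤ M)
    (haε : ∀ᵐ z ∂μ.prod ν, z.1 ∈ U → ‖a z‖ ≤ ε) :
    eLpNorm (fun z => a z * k z.1 * g z.2) p (μ.prod ν)
      ≤ (ENNReal.ofReal ε * eLpNorm k p μ + ENNReal.ofReal M * eLpNorm (Uᶜ.indicator k) p μ)
        * eLpNorm g p ν := by
  set G : α → ℝ := (ε • fun x => ‖k x‖) + M • fun x => ‖Uᶜ.indicator k x‖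
  have hG : AEStronglyMeasurable G μ :=
    (hk.norm.const_smul ε).add ((hk.indicator hU.compl).norm.const_smul M)
  have hΦ : ∀ᵐ z ∂μ.prod ν, ‖a z * k z.1 * g z.2‖ ≤ ‖G z.1‖ * ‖g z.2‖ := by
    filter_upwards [haM, haε] with z hzM hzε
    simp only [G, norm_mul, Pi.add_apply, Pi.smul_apply, smul_eq_mul]
    rw [Real.norm_of_nonneg (by positivity)]
    gcongr
    by_cases hz : z.1 ∈ U
    · rw [Set.indicator_of_notMem (Set.notMem_compl_iff.2 hz), norm_zero, mul_zero, add_zero]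
      exact mul_le_mul_of_nonneg_right (hzε hz) (norm_nonneg _)
    · rw [Set.indicator_of_mem (Set.mem_compl hz)]
      nlinarith [norm_nonneg (k z.1)]
  calc eLpNorm (fun z => a z * k z.1 * g z.2) p (μ.prod ν) ≤ eLpNorm G p μ * eLpNorm g p ν :=
        eLpNorm_prod_le_mul_of_norm_le hp hG hg hΦ
    _ ≤ _ := by
        gcongr
        refine (eLpNorm_add_le (hk.norm.const_smul ε) ((hk.indicator hU.compl).norm.const_smul M)
          hp1).trans_eq ?_
        rw [eLpNorm_const_smul, eLpNorm_const_smul, eLpNorm_norm, eLpNorm_norm,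
          Real.enorm_of_nonneg hε, Real.enorm_of_nonneg hM]

end ProductBound

theorem lintegral_enorm_deriv_sq_eq_volume_image {s : Set ℂ} (hs : MeasurableSet s) {f f' : ℂ → ℂ}
    (hf : ∀ x ∈ s, HasDerivWithinAt f (f' x) s x) (hinj : Set.InjOn f s) :
    ∫⁻ x in s, ‖f' x‖ₑ ^ 2 = volume (f '' s) := by
  rw [← lintegral_abs_det_fderiv_eq_addHaar_image volume hs
    (fun x hx => (hf x hx).hasFDerivWithinAt.restrictScalars ℝ) hinj]
  refine setLIntegral_congr_fun hs fun x _ => ?_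
  simp [ContinuousLinearMap.det, LinearMap.det_restrictScalars, Algebra.norm_complex_eq,
    Complex.normSq_eq_norm_sq]

theorem eLpNorm_two_le_one_of_lintegral_le_one {α E : Type*} [MeasurableSpace α] {μ : Measure α}
    [NormedAddCommGroup E] {f : α → E} (hf : ∫⁻ x, ‖f x‖ₑ ^ 2 ∂μ ≤ 1) : eLpNorm f 2 μ ≤ 1 := by
  rw [eLpNorm_eq_lintegral_rpow_enorm_toReal two_ne_zero ENNReal.ofNat_ne_top]
  simp only [ENNReal.toReal_ofNat, ENNReal.rpow_ofNat]
  exact ENNReal.rpow_le_one hf (by norm_num)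

theorem Complex.volume_ball_zero_one : volume (ball (0 : ℂ) 1) = ENNReal.ofReal Real.pi := by
  simp [← NNReal.coe_real_pi]

noncomputable def moebius (p z : ℂ) : ℂ := (p - z) / (1 - conj p * z)

theorem one_sub_conj_mul_ne_zero {p z : ℂ} (hp : ‖p‖ < 1) (hz : ‖z‖ ≤ 1) :
    1 - conj p * z ≠ 0 := by
  refine sub_ne_zero.2 fun h => ?_
  have : ‖conj p * z‖ < 1 := by
    rw [norm_mul, RCLike.norm_conj]
    nlinarith [norm_nonneg p, norm_nonneg z]
  rw [← h, norm_one] at this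
  exact lt_irrefl _ this

theorem normSq_one_sub_conj_mul_sub_normSq_sub (p z : ℂ) :
    Complex.normSq (1 - conj p * z) - Complex.normSq (p - z)
      = (1 - Complex.normSq p) * (1 - Complex.normSq z) := by
  simp only [Complex.normSq_apply, Complex.mul_re, Complex.mul_im, Complex.sub_re,
    Complex.sub_im, Complex.one_re, Complex.one_im, Complex.conj_re, Complex.conj_im]
  ring

theorem norm_sub_sub_norm_sub_le_norm_one_sub_conj_mul {p z ζ : ℂ} (hζ : ‖ζ‖ = 1)
    (hz : ‖z‖ ≤ 1) : ‖z - ζ‖ - ‖p - ζ‖ ≤ ‖1 - conj p * z‖ := by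
  have hζζ : conj ζ * ζ = 1 := by
    rw [Complex.conj_mul', hζ]; norm_num
  have hsplit : 1 - conj p * z = conj ζ * (ζ - z) + conj (ζ - p) * z := by
    rw [map_sub]; linear_combination -hζζ
  have hfar : ‖conj ζ * (ζ - z)‖ = ‖z - ζ‖ := by
    rw [norm_mul, RCLike.norm_conj, hζ, one_mul, norm_sub_rev]
  have hnear : ‖conj (ζ - p) * z‖ ≤ ‖p - ζ‖ := by
    rw [norm_mul, RCLike.norm_conj, norm_sub_rev]
    exact mul_le_of_le_one_right (norm_nonneg _) hz
  rw [hsplit, ← hfar]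
  linarith [norm_sub_le_norm_add (conj ζ * (ζ - z)) (conj (ζ - p) * z)]

theorem norm_moebius_lt_one {p z : ℂ} (hp : ‖p‖ < 1) (hz : ‖z‖ < 1) : ‖moebius p z‖ < 1 := by
  have hd := one_sub_conj_mul_ne_zero hp hz.le
  rw [moebius, norm_div, div_lt_one (norm_pos_iff.2 hd),
    ← sq_lt_sq₀ (norm_nonneg _) (norm_nonneg _),
    ← Complex.normSq_eq_norm_sq, ← Complex.normSq_eq_norm_sq, ← sub_pos,
    normSq_one_sub_conj_mul_sub_normSq_sub, Complex.normSq_eq_norm_sq, Complex.normSq_eq_norm_sq]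
  have := norm_nonneg p
  have := norm_nonneg z
  apply mul_pos <;> nlinarith

theorem moebius_moebius {p z : ℂ} (hp : ‖p‖ < 1) (hz : ‖z‖ < 1) : moebius p (moebius p z) = z := by
  have h1 := one_sub_conj_mul_ne_zero hp hz.le
  have h2 := one_sub_conj_mul_ne_zero hp (norm_moebius_lt_one hp hz).le
  have h3 := one_sub_conj_mul_ne_zero hp hp.le
  have h1' : 1 - z * conj p ≠ 0 := by rwa [mul_comm] at h1
  simp only [moebius] at h2 ⊢
  rw [div_eq_iff h2]
  field_simp
  ring

theorem measurable_normBergmanKernel (p : ℂ) : Measurable (normBergmanKernel p) := by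
  unfold normBergmanKernel
  fun_prop

theorem hasDerivAt_moebius {p z : ℂ} (hd : 1 - conj p * z ≠ 0) :
    HasDerivAt (moebius p) (-(Real.sqrt Real.pi : ℂ) * normBergmanKernel p z) z := by
  have hπ : (Real.sqrt Real.pi : ℂ) ≠ 0 :=
    Complex.ofReal_ne_zero.2 (Real.sqrt_ne_zero'.2 Real.pi_pos)
  have hnum : ((‖p‖ ^ 2 : ℝ) : ℂ) = conj p * p := by
    rw [← Complex.normSq_eq_norm_sq, Complex.normSq_eq_conj_mul_self]
  refine (((hasDerivAt_id z).const_sub p).div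
    (((hasDerivAt_id z).const_mul (conj p)).const_sub 1) hd).congr_deriv ?_
  rw [normBergmanKernel, Complex.ofReal_sub, Complex.ofReal_one, hnum, id]
  field_simp
  ring

theorem eLpNorm_normBergmanKernel_le_one {p : ℂ} (hp : ‖p‖ < 1) :
    eLpNorm (normBergmanKernel p) 2 (volume.restrict (ball 0 1)) ≤ 1 := by
  have hπ : ENNReal.ofReal Real.pi ≠ 0 := by simp [Real.pi_pos]
  have hjac : ENNReal.ofReal Real.pi * ∫⁻ z in ball 0 1, ‖normBergmanKernel p z‖ₑ ^ 2
      = volume (moebius p '' ball 0 1) := by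
    rw [← lintegral_const_mul' _ _ ENNReal.ofReal_ne_top, ← lintegral_enorm_deriv_sq_eq_volume_image
      measurableSet_ball (fun z hz => (hasDerivAt_moebius (one_sub_conj_mul_ne_zero hp
        (mem_ball_zero_iff.1 hz).le)).hasDerivWithinAt)]
    · congr 1 with z
      rw [enorm_mul, enorm_neg, mul_pow]
      congr 1
      rw [← ofReal_norm, Complex.norm_real,
        Real.norm_of_nonneg (Real.sqrt_nonneg _), ← ENNReal.ofReal_pow (Real.sqrt_nonneg _),
        Real.sq_sqrt Real.pi_pos.le]
    · intro a ha b hb hab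
      rw [mem_ball_zero_iff] at ha hb
      rw [← moebius_moebius hp ha, hab, moebius_moebius hp hb]
  refine eLpNorm_two_le_one_of_lintegral_le_one
    ((ENNReal.mul_le_mul_iff_right hπ ENNReal.ofReal_ne_top).1 ?_)
  rw [hjac, mul_one, ← Complex.volume_ball_zero_one]
  exact measure_mono (Set.image_subset_iff.2 fun z hz =>
    mem_ball_zero_iff.2 (norm_moebius_lt_one hp (mem_ball_zero_iff.1 hz)))

theorem norm_normBergmanKernel {p : ℂ} (hp : ‖p‖ ≤ 1) (z : ℂ) :
    ‖normBergmanKernel p z‖ = (1 - ‖p‖ ^ 2) / (Real.sqrt Real.pi * ‖1 - conj p * z‖ ^ 2) := by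
  have hnum : 0 ≤ 1 - ‖p‖ ^ 2 := by nlinarith [norm_nonneg p]
  rw [normBergmanKernel, norm_div, norm_mul, norm_pow, Complex.norm_real, Complex.norm_real,
    Real.norm_of_nonneg hnum, Real.norm_of_nonneg (Real.sqrt_nonneg _)]

theorem norm_normBergmanKernel_le_of_le_norm_sub {p z ζ : ℂ} (hζ : ‖ζ‖ = 1) (hp : ‖p‖ ≤ 1)
    (hz : ‖z‖ ≤ 1) {δ : ℝ} (hδ : 0 < δ) (hpζ : ‖p - ζ‖ ≤ δ / 2) (hzζ : δ ≤ ‖z - ζ‖) :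
    ‖normBergmanKernel p z‖ ≤ (1 - ‖p‖ ^ 2) / (Real.sqrt Real.pi * (δ / 2) ^ 2) := by
  have hden : δ / 2 ≤ ‖1 - conj p * z‖ := by
    linarith [norm_sub_sub_norm_sub_le_norm_one_sub_conj_mul (p := p) hζ hz]
  rw [norm_normBergmanKernel hp]
  gcongr
  nlinarith [norm_nonneg p]

theorem tendsto_eLpNorm_indicator_normBergmanKernel {ζ : ℂ} (hζ : ‖ζ‖ = 1) {δ : ℝ} (hδ : 0 < δ) :
    Tendsto (fun p => eLpNorm ((ball ζ δ)ᶜ.indicator (normBergmanKernel p)) 2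
      (volume.restrict (ball 0 1))) (𝓝[ball 0 1] ζ) (𝓝 0) := by
  set κ : ℂ → ℝ := fun p => (1 - ‖p‖ ^ 2) / (Real.sqrt Real.pi * (δ / 2) ^ 2)
  have hκ : Tendsto κ (𝓝 ζ) (𝓝 0) := by
    have : Continuous κ := by fun_prop
    simpa [κ, hζ] using this.tendsto ζ
  have hbound : Tendsto (fun p => volume (ball (0 : ℂ) 1) ^ (2 : ℝ≥0∞).toReal⁻¹ *
      ENNReal.ofReal (κ p)) (𝓝[ball 0 1] ζ) (𝓝 0) := by
    simpa using ENNReal.Tendsto.const_mul (ENNReal.tendsto_ofReal (hκ.mono_left nhdsWithin_le_nhds))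
      (Or.inr (by simp))
  refine tendsto_of_tendsto_of_tendsto_of_le_of_le' tendsto_const_nhds hbound
    (Eventually.of_forall fun _ => zero_le) ?_
  filter_upwards [self_mem_nhdsWithin,
    nhdsWithin_le_nhds (closedBall_mem_nhds ζ (half_pos hδ))] with p hp hpζ
  rw [← Measure.restrict_apply_univ]
  refine eLpNorm_le_of_ae_bound ?_
  have hp1 : ‖p‖ ≤ 1 := (mem_ball_zero_iff.1 hp).le
  filter_upwards [ae_restrict_mem measurableSet_ball] with z hz
  by_cases hzζ : z ∈ ball ζ δ
  · simp only [Set.indicator_of_notMem (Set.notMem_compl_iff.2 hzζ), norm_zero, κ]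
    exact div_nonneg (by nlinarith [norm_nonneg p]) (by positivity)
  · rw [Set.indicator_of_mem hzζ]
    rw [mem_ball_iff_norm, not_lt] at hzζ
    exact norm_normBergmanKernel_le_of_le_norm_sub hζ hp1 (mem_ball_zero_iff.1 hz).le hδ
      (mem_closedBall_iff_norm.1 hpζ) hzζ

theorem eLpNorm_mul_normBergmanKernel_mul_le {Y : Type*} [MeasureSpace Y]
    [SFinite (volume : Measure Y)] {t : Set Y} (ht : MeasurableSet t) {a : ℂ × Y → ℂ}
    {g : Y → ℂ} (hg : AEStronglyMeasurable g (volume.restrict t)) {p ζ : ℂ} (hp : ‖p‖ < 1)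
    {ε M δ : ℝ} (hε : 0 ≤ ε) (hM : 0 ≤ M) (haM : ∀ z ∈ ball 0 1 ×ˢ t, ‖a z‖ ≤ M)
    (haε : ∀ z ∈ ball 0 1 ×ˢ t, dist z.1 ζ < δ → ‖a z‖ ≤ ε) :
    eLpNorm (fun z => a z * normBergmanKernel p z.1 * g z.2) 2
        (volume.restrict (ball 0 1 ×ˢ t))
      ≤ (ENNReal.ofReal ε + ENNReal.ofReal M *
          eLpNorm ((ball ζ δ)ᶜ.indicator (normBergmanKernel p)) 2 (volume.restrict (ball 0 1)))
        * eLpNorm g 2 (volume.restrict t) := by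
  rw [Measure.volume_eq_prod, ← Measure.prod_restrict]
  have hD : ∀ᵐ z ∂(volume.restrict (ball (0 : ℂ) 1)).prod (volume.restrict t),
      z ∈ ball 0 1 ×ˢ t := by
    rw [Measure.prod_restrict]
    exact ae_restrict_mem (measurableSet_ball.prod ht)
  refine (eLpNorm_mul_mul_prod_le one_le_two ENNReal.ofNat_ne_top
    (measurable_normBergmanKernel p).aestronglyMeasurable measurableSet_ball hg hε hM
    (by filter_upwards [hD] with z hz using haM z hz)
    (by filter_upwards [hD] with z hz hzζ using haε z hz hzζ)).trans ?_
  gcongr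
  exact mul_le_of_le_one_right' (eLpNorm_normBergmanKernel_le_one hp)

theorem lemma1_part1_general
    (m : ℕ)
    (ψ : ℂ × (Fin m → ℂ) → ℂ)
    (hψ : ContinuousOn ψ (closedBall (0 : ℂ) 1 ×ˢ closedBall (0 : Fin m → ℂ) 1))
    (ζ : ℂ) (hζ : ‖ζ‖ = 1)
    (h : ℂ × (Fin m → ℂ) → (Fin m → ℂ) → ℂ)
    (hmeas : ∀ p, AEStronglyMeasurable (h p) (volume.restrict (ball (0 : Fin m → ℂ) 1)))
    (hbd : ∃ C : ℝ, ∀ p,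
      eLpNorm (h p) 2 (volume.restrict (ball (0 : Fin m → ℂ) 1)) ≤ ENNReal.ofReal C)
    (q' : Fin m → ℂ) :
    Tendsto
      (fun p : ℂ × (Fin m → ℂ) =>
        eLpNorm
          (fun z : ℂ × (Fin m → ℂ) =>
            (ψ z - ψ (ζ, z.2)) * normBergmanKernel p.1 z.1 * h p z.2) 2
          (volume.restrict (ball (0 : ℂ) 1 ×ˢ ball (0 : Fin m → ℂ) 1)))
      (nhdsWithin (ζ, q') (ball (0 : ℂ) 1 ×ˢ ball (0 : Fin m → ℂ) 1))
      (nhds 0) := by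
  obtain ⟨C, hC⟩ := hbd
  have hζ' : ζ ∈ closedBall (0 : ℂ) 1 := mem_closedBall_zero_iff.2 hζ.le
  obtain ⟨M, hM0, hM⟩ :=
    hψ.exists_forall_norm_sub_le (isCompact_closedBall _ _) (isCompact_closedBall _ _) hζ'
  have hball : ball (0 : ℂ) 1 ×ˢ ball (0 : Fin m → ℂ) 1 ⊆ closedBall 0 1 ×ˢ closedBall 0 1 :=
    Set.prod_mono ball_subset_closedBall ball_subset_closedBall
  refine tendsto_nhds_zero_of_forall_le_ofReal_mul_add (K := ENNReal.ofReal C)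
    ENNReal.ofReal_ne_top fun ε hε => ?_
  obtain ⟨δ, hδ, hψδ⟩ := hψ.exists_forall_dist_lt_norm_sub_le (isCompact_closedBall _ _)
    (isCompact_closedBall _ _) hζ' hε
  refine ⟨fun p => ENNReal.ofReal M * eLpNorm ((ball ζ δ)ᶜ.indicator (normBergmanKernel p.1)) 2
    (volume.restrict (ball 0 1)) * ENNReal.ofReal C, ?_, ?_⟩
  · have hfst := (tendsto_eLpNorm_indicator_normBergmanKernel hζ hδ).comp
      (nhdsWithin_prod_eq ζ q' _ (ball (0 : Fin m → ℂ) 1) ▸ tendsto_fst)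
    simpa using ENNReal.Tendsto.mul_const (ENNReal.Tendsto.const_mul hfst
      (Or.inr ENNReal.ofReal_ne_top)) (Or.inr ENNReal.ofReal_ne_top)
  · filter_upwards [self_mem_nhdsWithin] with p hp
    calc _ ≤ (ENNReal.ofReal ε + ENNReal.ofReal M * eLpNorm ((ball ζ δ)ᶜ.indicator
            (normBergmanKernel p.1)) 2 (volume.restrict (ball 0 1))) * ENNReal.ofReal C :=
          (eLpNorm_mul_normBergmanKernel_mul_le measurableSet_ball (hmeas p)
            (mem_ball_zero_iff.1 hp.1) hε.le hM0 (fun z hz => hM z (hball hz))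
            (fun z hz => hψδ z (hball hz))).trans (by gcongr; exact hC p)
      _ = _ := add_mul _ _ _

/-- Lemma 1(i): writing the polydisc 𝔻ⁿ (n = m+1 ≥ 2) as 𝔻 × 𝔻^m, for ψ continuous on the
closed polydisc, ζ ∈ 𝕋, and a family {h_p} bounded in L²(𝔻^m), the L²(𝔻ⁿ)-norms
‖(ψ − ψ_ζ) k^𝔻_{p₁} h_p‖ tend to 0 as p → q = (ζ, q'). -/
theorem lemma1_part1
    (m : ℕ) (hm : 1 ≤ m)
    (ψ : ℂ × (Fin m → ℂ) → ℂ)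
    (hψ : ContinuousOn ψ (closedBall (0 : ℂ) 1 ×ˢ closedBall (0 : Fin m → ℂ) 1))
    (ζ : ℂ) (hζ : ‖ζ‖ = 1)
    (h : ℂ × (Fin m → ℂ) → (Fin m → ℂ) → ℂ)
    (hmeas : ∀ p, AEStronglyMeasurable (h p) (volume.restrict (ball (0 : Fin m → ℂ) 1)))
    (hbd : ∃ C : ℝ, ∀ p,
      eLpNorm (h p) 2 (volume.restrict (ball (0 : Fin m → ℂ) 1)) ≤ ENNReal.ofReal C)
    (q' : Fin m → ℂ) (hq' : q' ∈ closedBall (0 : Fin m → ℂ) 1) :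
    Tendsto
      (fun p : ℂ × (Fin m → ℂ) =>
        eLpNorm
          (fun z : ℂ × (Fin m → ℂ) =>
            (ψ z - ψ (ζ, z.2)) * normBergmanKernel p.1 z.1 * h p z.2) 2
          (volume.restrict (ball (0 : ℂ) 1 ×ˢ ball (0 : Fin m → ℂ) 1)))
      (nhdsWithin (ζ, q') (ball (0 : ℂ) 1 ×ˢ ball (0 : Fin m → ℂ) 1))
      (nhds 0) :=
  lemma1_part1_general m ψ hψ ζ hζ h hmeas hbd q'
end
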